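/- arXiv:1505.01328 — 2 statements merged into one kernel-verified Lean document; each statement's English description precedes it below -/
import Mathlib

section
/- Uniqueness for the Skorohod problem: let z : [0,T] → ℝᴺ be continuous with 1·z(0) ≤ θ. If continuous functions y : [0,T] → ℝᴺ and ℓ : [0,T] → ℝ satisfy: ℓ is nondecreasing with ℓ(0) = 0, y = z − ℓ e_N, 1·y(t) ≤ θ for all t ∈ [0,T], and ℓ is constant on every subinterval [s,t] of [0,T] on which 1·y < θ, then necessarily y = Γ(z) and ℓ = g_z. -/
open Set

/-- The coordinate sum `1 · x` of a vector in Euclidean space. -/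
noncomputable def sumC {N : ℕ} (x : EuclideanSpace ℝ (Fin N)) : ℝ := ∑ i, x i

/-- The regulator `g_f(t) = sup_{0 ≤ u ≤ t} (θ - 1·f(u))⁻`. -/
noncomputable def reg (N : ℕ) (θ : ℝ) (f : ℝ → EuclideanSpace ℝ (Fin N)) (t : ℝ) : ℝ :=
  sSup ((fun u => max (sumC (f u) - θ) 0) '' Icc 0 t)

/-- The `N`-th standard basis vector `e_N`. -/
noncomputable def eN (N : ℕ) (hN : 1 ≤ N) : EuclideanSpace ℝ (Fin N) :=
  EuclideanSpace.single ⟨N - 1, by omega⟩ 1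

/-- The Skorohod-type reflection map `Γ(f)(t) = f(t) - g_f(t) e_N`. -/
noncomputable def Gam (N : ℕ) (hN : 1 ≤ N) (θ : ℝ) (f : ℝ → EuclideanSpace ℝ (Fin N))
    (t : ℝ) : EuclideanSpace ℝ (Fin N) :=
  f t - reg N θ f t • eN N hN

/-- The sup norm `‖f‖_T = sup_{t ∈ [0,T]} ‖f(t)‖`. -/
noncomputable def supNorm (N : ℕ) (T : ℝ) (f : ℝ → EuclideanSpace ℝ (Fin N)) : ℝ :=
  sSup ((fun t => ‖f t‖) '' Icc 0 T)

lemma sumC_sub' {N : ℕ} (a b : EuclideanSpace ℝ (Fin N)) : sumC (a - b) = sumC a - sumC b := by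
  simp [sumC, Finset.sum_sub_distrib]

lemma sumC_smul' {N : ℕ} (c : ℝ) (v : EuclideanSpace ℝ (Fin N)) : sumC (c • v) = c * sumC v := by
  simp [sumC, Finset.mul_sum]

lemma sumC_eN' (N : ℕ) (hN : 1 ≤ N) : sumC (eN N hN) = 1 := by
  simp [sumC, eN, EuclideanSpace.single_apply]

lemma continuous_sumC' {N : ℕ} : Continuous (sumC (N := N)) :=
  continuous_finset_sum _ fun i _ => (EuclideanSpace.proj (𝕜 := ℝ) i).continuous

/-- Uniqueness for the Skorohod problem in `G = {x : 1·x ≤ θ}` with reflection direction `-e_N`: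
any solution pair `(y, ℓ)` for continuous data `z` with `1·z(0) ≤ θ` coincides with
`(Γ(z), g_z)` on `[0,T]`. -/
theorem skorohod_unique (N : ℕ) (hN : 1 ≤ N) (θ T : ℝ) (hT : 0 < T)
    (z : ℝ → EuclideanSpace ℝ (Fin N))
    (hz : ContinuousOn z (Icc 0 T)) (hz0 : sumC (z 0) ≤ θ)
    (y : ℝ → EuclideanSpace ℝ (Fin N)) (ℓ : ℝ → ℝ)
    (hy : ContinuousOn y (Icc 0 T)) (hℓ : ContinuousOn ℓ (Icc 0 T))
    (hℓmono : MonotoneOn ℓ (Icc 0 T)) (hℓ0 : ℓ 0 = 0)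
    (hrepr : ∀ t ∈ Icc (0:ℝ) T, y t = z t - ℓ t • eN N hN)
    (hG : ∀ t ∈ Icc (0:ℝ) T, sumC (y t) ≤ θ)
    (hflat : ∀ s t : ℝ, 0 ≤ s → s ≤ t → t ≤ T →
      (∀ u ∈ Icc s t, sumC (y u) < θ) → ℓ t = ℓ s) :
    ∀ t ∈ Icc (0:ℝ) T, y t = Gam N hN θ z t ∧ ℓ t = reg N θ z t := by
  intro t ht
  obtain ⟨ht0, htT⟩ := ht
  set F : ℝ → ℝ := fun u => max (sumC (z u) - θ) 0 with hF
  have hFcont : ContinuousOn F (Icc 0 T) :=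
    ((continuous_id.sub continuous_const).max continuous_const).comp_continuousOn
      (continuous_sumC'.comp_continuousOn hz)
  have hsumy : ∀ u ∈ Icc (0:ℝ) T, sumC (y u) = sumC (z u) - ℓ u := by
    intro u hu
    rw [hrepr u hu, sumC_sub', sumC_smul', sumC_eN' N hN, mul_one]
  have hℓnonneg : ∀ u ∈ Icc (0:ℝ) T, 0 ≤ ℓ u := by
    intro u hu
    rw [← hℓ0]
    exact hℓmono ⟨le_refl 0, hT.le⟩ hu hu.1
  have hFle : ∀ u ∈ Icc (0:ℝ) T, F u ≤ ℓ u := by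
    intro u hu
    refine max_le ?_ (hℓnonneg u hu)
    have := hG u hu
    rw [hsumy u hu] at this
    linarith
  have hSne : (F '' Icc 0 t).Nonempty := ⟨F 0, mem_image_of_mem _ ⟨le_refl 0, ht0⟩⟩
  have hSbdd : BddAbove (F '' Icc 0 t) :=
    (isCompact_Icc.image_of_continuousOn (hFcont.mono (Icc_subset_Icc le_rfl htT))).bddAbove
  have hreg : reg N θ z t = sSup (F '' Icc 0 t) := rfl
  have hg_ge : ∀ u ∈ Icc (0:ℝ) t, F u ≤ reg N θ z t := fun u hu =>
    hreg ▸ le_csSup hSbdd (mem_image_of_mem _ hu)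
  have hg0 : 0 ≤ reg N θ z t := le_trans (le_max_right _ 0) (hg_ge 0 ⟨le_rfl, ht0⟩)
  have hgle : reg N θ z t ≤ ℓ t := by
    rw [hreg]
    refine csSup_le hSne ?_
    rintro a ⟨u, hu, rfl⟩
    have hu' : u ∈ Icc (0:ℝ) T := ⟨hu.1, hu.2.trans htT⟩
    exact (hFle u hu').trans (hℓmono hu' ⟨ht0, htT⟩ hu.2)
  have hℓeq : ℓ t = reg N θ z t := by
    refine le_antisymm ?_ hgle
    by_contra h
    push_neg at h
    set A : Set ℝ := Icc 0 t ∩ ℓ ⁻¹' Iic (reg N θ z t) with hA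
    have hA0 : (0:ℝ) ∈ A := ⟨⟨le_rfl, ht0⟩, by simp [hℓ0, hg0]⟩
    have hAbdd : BddAbove A := ⟨t, fun u hu => hu.1.2⟩
    have hAclosed : IsClosed A :=
      (hℓ.mono (Icc_subset_Icc le_rfl htT)).preimage_isClosed_of_isClosed
        isClosed_Icc isClosed_Iic
    set s := sSup A with hs
    have hsA : s ∈ A := hAclosed.csSup_mem ⟨0, hA0⟩ hAbdd
    have hs0 : 0 ≤ s := hsA.1.1
    have hsT : s ≤ T := hsA.1.2.trans htT
    have hst : s < t := by
      rcases lt_or_eq_of_le hsA.1.2 with h' | h'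
      · exact h'
      · exfalso
        have : ℓ t ≤ reg N θ z t := h' ▸ hsA.2
        linarith
    have hstrict : ∀ u ∈ Ioc s t, sumC (y u) < θ := by
      intro u hu
      have huT : u ∈ Icc (0:ℝ) T := ⟨hs0.trans hu.1.le, hu.2.trans htT⟩
      have hnotA : u ∉ A := fun hmem => absurd (le_csSup hAbdd hmem) (not_le.mpr hu.1)
      have hℓu : reg N θ z t < ℓ u := by
        by_contra hc
        push_neg at hc
        exact hnotA ⟨⟨hs0.trans hu.1.le, hu.2⟩, hc⟩
      have hzu : sumC (z u) - θ ≤ reg N θ z t :=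
        le_trans (le_max_left _ 0) (hg_ge u ⟨hs0.trans hu.1.le, hu.2⟩)
      rw [hsumy u huT]
      linarith
    have hkey : ∀ ε > (0:ℝ), ℓ t < reg N θ z t + ε := by
      intro ε hε
      have hc : ContinuousWithinAt ℓ (Icc 0 T) s := hℓ s ⟨hs0, hsT⟩
      obtain ⟨δ, hδ, hδ'⟩ := Metric.continuousWithinAt_iff.mp hc ε hε
      set s' := min (s + δ / 2) t with hs'
      have hss' : s < s' := lt_min (by linarith) hst
      have hs't : s' ≤ t := min_le_right _ _
      have hs'T : s' ∈ Icc (0:ℝ) T := ⟨hs0.trans hss'.le, hs't.trans htT⟩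
      have hdist : dist s' s < δ := by
        rw [Real.dist_eq, abs_of_nonneg (by linarith)]
        have : s' ≤ s + δ / 2 := min_le_left _ _
        linarith
      have hflat' : ℓ t = ℓ s' := by
        refine hflat s' t (hs0.trans hss'.le) hs't htT ?_
        intro u hu
        exact hstrict u ⟨hss'.trans_le hu.1, hu.2⟩
      have hclose : |ℓ s' - ℓ s| < ε := by
        have := hδ' hs'T hdist
        rwa [Real.dist_eq] at this
      have hℓs : ℓ s ≤ reg N θ z t := hsA.2
      rw [hflat']
      cases abs_lt.mp hclose with
      | intro h1 h2 => linarith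
    have : ℓ t ≤ reg N θ z t := by
      refine le_of_forall_pos_le_add ?_
      intro ε hε
      exact (hkey ε hε).le
    linarith
  refine ⟨?_, hℓeq⟩
  rw [Gam, hrepr t ⟨ht0, htT⟩, hℓeq]
end

section
/- A priori (Gronwall-type) bound for reflected equations: assume θ ≥ 0, let b : ℝᴺ → ℝᴺ be Lipschitz with constant L and b(0) = 0, let h : [0,T] → ℝᴺ be bounded, and suppose the continuous function x : [0,T] → ℝᴺ satisfies x(t) = Γ(h + ∫₀^· b(x(u)) du)(t) for all t ∈ [0,T]. Then ‖x‖_T ≤ (1 + √N) ‖h‖_T e^{(1+√N) L T}. -/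
open Set

lemma abs_sumC_le {N : ℕ} (y : EuclideanSpace ℝ (Fin N)) :
    |sumC y| ≤ Real.sqrt N * ‖y‖ := by
  have h1 : |sumC y| ≤ ∑ i, |y i| := Finset.abs_sum_le_sum_abs _ _
  have h2 : (∑ i, |y i|) ^ 2 ≤ (N : ℝ) * ∑ i, (y i) ^ 2 := by
    have := sq_sum_le_card_mul_sum_sq (s := Finset.univ) (f := fun i : Fin N => |y i|)
    simpa [sq_abs] using this
  have hnorm : ‖y‖ = Real.sqrt (∑ i, (y i) ^ 2) := by
    rw [EuclideanSpace.norm_eq]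
    congr 1
    exact Finset.sum_congr rfl fun i _ => by rw [Real.norm_eq_abs, sq_abs]
  have h3 : ∑ i, |y i| ≤ Real.sqrt ((N : ℝ) * ∑ i, (y i) ^ 2) := by
    rw [show (∑ i, |y i|) = Real.sqrt ((∑ i, |y i|)^2) from
      (Real.sqrt_sq (Finset.sum_nonneg fun i _ => abs_nonneg _)).symm]
    exact Real.sqrt_le_sqrt h2
  calc |sumC y| ≤ ∑ i, |y i| := h1
    _ ≤ Real.sqrt ((N : ℝ) * ∑ i, (y i) ^ 2) := h3
    _ = Real.sqrt N * ‖y‖ := by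
        rw [Real.sqrt_mul (Nat.cast_nonneg N), hnorm]

lemma norm_eN {N : ℕ} (hN : 1 ≤ N) : ‖eN N hN‖ = 1 := by
  rw [eN, EuclideanSpace.norm_single, norm_one]

/-- A priori (Gronwall-type) bound for the reflected equation
`x = Γ(h + ∫₀^· b(x(u))du)`: one has `‖x‖_T ≤ (1+√N)‖h‖_T e^{(1+√N)LT}`. -/
theorem reflected_gronwall_bound (N : ℕ) (hN : 1 ≤ N) (θ T : ℝ) (hθ : 0 ≤ θ) (hT : 0 < T)
    (L : NNReal) (b : EuclideanSpace ℝ (Fin N) → EuclideanSpace ℝ (Fin N))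
    (hb : LipschitzWith L b) (hb0 : b 0 = 0)
    (h : ℝ → EuclideanSpace ℝ (Fin N))
    (hh : ∃ C, ∀ t ∈ Icc (0:ℝ) T, ‖h t‖ ≤ C)
    (x : ℝ → EuclideanSpace ℝ (Fin N)) (hx : ContinuousOn x (Icc 0 T))
    (hfix : ∀ t ∈ Icc (0:ℝ) T,
      x t = Gam N hN θ (fun r => h r + ∫ u in (0:ℝ)..r, b (x u)) t) :
    supNorm N T x
      ≤ (1 + Real.sqrt N) * supNorm N T h * Real.exp ((1 + Real.sqrt N) * (L : ℝ) * T) := by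
  obtain ⟨C, hC⟩ := hh
  set f : ℝ → EuclideanSpace ℝ (Fin N) := fun r => h r + ∫ u in (0:ℝ)..r, b (x u) with hfdef
  set φ : ℝ → ℝ := fun t => ‖x t‖ with hφdef
  set H : ℝ := supNorm N T h with hHdef
  set sN : ℝ := Real.sqrt N with hsNdef
  have hsN : (0:ℝ) ≤ sN := Real.sqrt_nonneg _
  have h0T : (0:ℝ) ∈ Icc (0:ℝ) T := ⟨le_rfl, hT.le⟩
  have hbdd : BddAbove ((fun t => ‖h t‖) '' Icc 0 T) :=
    ⟨C, by rintro _ ⟨t, ht, rfl⟩; exact hC t ht⟩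
  have hhH : ∀ t ∈ Icc (0:ℝ) T, ‖h t‖ ≤ H := fun t ht => le_csSup hbdd ⟨t, ht, rfl⟩
  have hHnn : (0:ℝ) ≤ H := le_trans (norm_nonneg _) (hhH 0 h0T)
  have hbnorm : ∀ y, ‖b y‖ ≤ (L : ℝ) * ‖y‖ := by
    intro y
    have := hb.norm_sub_le y 0
    simpa [hb0] using this
  have hφc : ContinuousOn φ (Icc 0 T) := hx.norm
  have hφint : ∀ t ∈ Icc (0:ℝ) T, IntervalIntegrable φ MeasureTheory.volume 0 t := by
    intro t ht
    apply ContinuousOn.intervalIntegrable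
    rw [uIcc_of_le ht.1]
    exact hφc.mono (Icc_subset_Icc le_rfl ht.2)
  set ψ : ℝ → ℝ := fun t => ∫ s in (0:ℝ)..t, φ s with hψdef
  have hψnn : ∀ t ∈ Icc (0:ℝ) T, 0 ≤ ψ t := fun t ht =>
    intervalIntegral.integral_nonneg ht.1 (fun u _ => norm_nonneg _)
  set A : ℝ := (1 + sN) * H with hAdef
  set K : ℝ := (1 + sN) * (L : ℝ) with hKdef
  have hAnn : 0 ≤ A := mul_nonneg (by linarith) hHnn
  have hKnn : 0 ≤ K := mul_nonneg (by linarith) L.coe_nonneg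
  -- pointwise bound on f
  have key : ∀ t ∈ Icc (0:ℝ) T, φ t ≤ A + K * ψ t := by
    intro t ht
    have hψt : 0 ≤ ψ t := hψnn t ht
    have hfb : ∀ u ∈ Icc (0:ℝ) t, ‖f u‖ ≤ H + (L : ℝ) * ψ t := by
      intro u hu
      have hu' : u ∈ Icc (0:ℝ) T := ⟨hu.1, hu.2.trans ht.2⟩
      have hbxint : IntervalIntegrable (fun s => ‖b (x s)‖) MeasureTheory.volume 0 u := by
        apply ContinuousOn.intervalIntegrable
        rw [uIcc_of_le hu.1]
        exact (hb.continuous.comp_continuousOn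
          (hx.mono (Icc_subset_Icc le_rfl hu'.2))).norm
      have h1 : ‖∫ s in (0:ℝ)..u, b (x s)‖ ≤ ∫ s in (0:ℝ)..u, (L : ℝ) * φ s := by
        refine (intervalIntegral.norm_integral_le_integral_norm hu.1).trans ?_
        refine intervalIntegral.integral_mono_on hu.1 hbxint
          (((hφint u hu').const_mul _)) ?_
        intro s _
        exact hbnorm (x s)
      have h2 : ∫ s in (0:ℝ)..u, (L : ℝ) * φ s ≤ (L : ℝ) * ψ t := by
        rw [intervalIntegral.integral_const_mul]
        refine mul_le_mul_of_nonneg_left ?_ L.coe_nonneg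
        exact intervalIntegral.integral_mono_interval le_rfl hu.1 hu.2
          (Filter.Eventually.of_forall fun s => norm_nonneg _) (hφint t ht)
      calc ‖f u‖ ≤ ‖h u‖ + ‖∫ s in (0:ℝ)..u, b (x s)‖ := by
            rw [hfdef]; exact norm_add_le _ _
        _ ≤ H + (L : ℝ) * ψ t := add_le_add (hhH u hu') (h1.trans h2)
    have hBnn : 0 ≤ sN * (H + (L : ℝ) * ψ t) :=
      mul_nonneg hsN (by positivity)
    have hregle : reg N θ f t ≤ sN * (H + (L : ℝ) * ψ t) := by
      apply Real.sSup_le _ hBnn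
      rintro _ ⟨u, hu, rfl⟩
      have hm : max (sumC (f u) - θ) 0 ≤ |sumC (f u)| := by
        apply max_le _ (abs_nonneg _)
        exact (sub_le_self _ hθ).trans (le_abs_self _)
      exact hm.trans ((abs_sumC_le (f u)).trans
        (mul_le_mul_of_nonneg_left (hfb u hu) hsN))
    have hreg0 : 0 ≤ reg N θ f t := by
      have hmem : max (sumC (f 0) - θ) 0 ∈
          ((fun u => max (sumC (f u) - θ) 0) '' Icc 0 t) := ⟨0, ⟨le_rfl, ht.1⟩, rfl⟩
      have hbdd2 : BddAbove ((fun u => max (sumC (f u) - θ) 0) '' Icc 0 t) := by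
        refine ⟨sN * (H + (L : ℝ) * ψ t), ?_⟩
        rintro _ ⟨u, hu, rfl⟩
        have hm : max (sumC (f u) - θ) 0 ≤ |sumC (f u)| := by
          apply max_le _ (abs_nonneg _)
          exact (sub_le_self _ hθ).trans (le_abs_self _)
        exact hm.trans ((abs_sumC_le (f u)).trans
          (mul_le_mul_of_nonneg_left (hfb u hu) hsN))
      exact le_trans (le_max_right _ _) (le_csSup hbdd2 hmem)
    have hxeq : φ t = ‖f t - reg N θ f t • eN N hN‖ := by
      rw [hφdef]
      simp only [hfix t ht, Gam]
    calc φ t = ‖f t - reg N θ f t • eN N hN‖ := hxeq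
      _ ≤ ‖f t‖ + ‖reg N θ f t • eN N hN‖ := norm_sub_le _ _
      _ = ‖f t‖ + reg N θ f t := by
          rw [norm_smul, norm_eN hN, mul_one, Real.norm_eq_abs, abs_of_nonneg hreg0]
      _ ≤ (H + (L : ℝ) * ψ t) + sN * (H + (L : ℝ) * ψ t) :=
          add_le_add (hfb t ⟨ht.1, le_rfl⟩) hregle
      _ = A + K * ψ t := by rw [hAdef, hKdef]; ring
  -- Gronwall
  have hψc : ContinuousOn ψ (Icc 0 T) := by
    have hint : MeasureTheory.IntegrableOn φ (uIcc 0 T) MeasureTheory.volume := by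
      rw [uIcc_of_le hT.le]
      exact hφc.integrableOn_compact isCompact_Icc
    have := intervalIntegral.continuousOn_primitive_interval (a := (0:ℝ)) (b := T) hint
    rwa [uIcc_of_le hT.le] at this
  have hψ' : ∀ t ∈ Ico (0:ℝ) T, HasDerivWithinAt ψ (φ t) (Ici t) t := by
    intro t ht
    have htT : t ∈ Icc (0:ℝ) T := ⟨ht.1, ht.2.le⟩
    have hmem : Icc (0:ℝ) T ∈ nhdsWithin t (Ioi t) :=
      Filter.mem_of_superset (Ioc_mem_nhdsGT_of_mem ⟨le_rfl, ht.2⟩)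
        (Ioc_subset_Icc_self.trans (Icc_subset_Icc ht.1 le_rfl))
    exact intervalIntegral.integral_hasDerivWithinAt_right (hφint t htT)
      ⟨Icc 0 T, hmem, hφc.aestronglyMeasurable measurableSet_Icc⟩
      ((hφc t htT).mono_of_mem_nhdsWithin hmem)
  have hψ0 : ‖ψ 0‖ ≤ 0 := by
    simp [hψdef]
  have hgron : ∀ t ∈ Icc (0:ℝ) T, ‖ψ t‖ ≤ gronwallBound 0 K A (t - 0) := by
    refine norm_le_gronwallBound_of_norm_deriv_right_le hψc hψ' hψ0 ?_
    intro t ht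
    have htT : t ∈ Icc (0:ℝ) T := ⟨ht.1, ht.2.le⟩
    rw [Real.norm_eq_abs, Real.norm_eq_abs, abs_of_nonneg (norm_nonneg _),
      abs_of_nonneg (hψnn t htT)]
    linarith [key t htT]
  -- conclude pointwise bound on φ
  have hfinal : ∀ t ∈ Icc (0:ℝ) T, φ t ≤ A * Real.exp (K * T) := by
    intro t ht
    have hψb : ψ t ≤ gronwallBound 0 K A t := by
      have := hgron t ht
      rwa [Real.norm_eq_abs, abs_of_nonneg (hψnn t ht), sub_zero] at this
    have hexp : Real.exp (K * t) ≤ Real.exp (K * T) :=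
      Real.exp_le_exp.mpr (mul_le_mul_of_nonneg_left ht.2 hKnn)
    have h1 : φ t ≤ A * Real.exp (K * t) := by
      by_cases hK0 : K = 0
      · have := key t ht
        rw [hK0] at this ⊢
        simpa using this
      · have hgb : gronwallBound 0 K A t = A / K * (Real.exp (K * t) - 1) := by
          rw [gronwallBound_of_K_ne_0 hK0]; ring
        have := key t ht
        have h2 : K * ψ t ≤ K * (A / K * (Real.exp (K * t) - 1)) :=
          mul_le_mul_of_nonneg_left (hψb.trans_eq hgb) hKnn
        have h3 : K * (A / K * (Real.exp (K * t) - 1)) = A * (Real.exp (K * t) - 1) := by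
          field_simp
        nlinarith [this, h2, h3]
    exact h1.trans (mul_le_mul_of_nonneg_left hexp hAnn)
  have hgoal : supNorm N T x ≤ A * Real.exp (K * T) := by
    apply Real.sSup_le _ (by positivity)
    rintro _ ⟨t, ht, rfl⟩
    exact hfinal t ht
  calc supNorm N T x ≤ A * Real.exp (K * T) := hgoal
    _ = (1 + sN) * H * Real.exp ((1 + sN) * (L : ℝ) * T) := by rw [hAdef, hKdef]
end
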